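/- Fix an integer n ≥ 1, an integer d_n with 1 ≤ d_n ≤ n, and λ_n ∈ (0,1). Define a_n, b : ℓ↓ → ℝ^∞ by a_n(x)_i = λ_n ( β_n(x_{i−1}) − β_n(x_i) ) with the convention x₀ := 1, and b(x)_i = x_i − x_{i+1}, for i ≥ 1. Then the near fixed point μ_n belongs to ℓ↓, and μ_n is the unique x ∈ ℓ↓ satisfying a_n(x) = b(x) (i.e. a_n(x)_i = b(x)_i for all i ≥ 1). -/
import Mathlib


open Filter Topology

/-- `x ∈ ℓ↓`, where `x i` stands for the paper's coordinate `x_{i+1}`: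
all coordinates lie in `[0,1]`, the sequence is non-increasing and summable. -/
def MemLdown (x : ℕ → ℝ) : Prop :=
  (∀ i, 0 ≤ x i ∧ x i ≤ 1) ∧ (∀ i, x (i + 1) ≤ x i) ∧ Summable x

/-- `β_n(x) = ∏_{i=0}^{d−1} ((x − i/n)/(1 − i/n))⁺`. -/
noncomputable def betaFn (n d : ℕ) (x : ℝ) : ℝ :=
  ∏ i ∈ Finset.range d, max ((x - (i : ℝ) / (n : ℝ)) / (1 - (i : ℝ) / (n : ℝ))) 0

/-- The derivative `β'_n` of `β_n` away from `(d−1)/n`, set to `0` for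
`x ≤ (d−1)/n`. -/
noncomputable def betaDeriv (n d : ℕ) (x : ℝ) : ℝ :=
  if ((d : ℝ) - 1) / (n : ℝ) < x then
    ∑ j ∈ Finset.range d, (1 - (j : ℝ) / (n : ℝ))⁻¹ *
      ∏ i ∈ (Finset.range d).erase j, (x - (i : ℝ) / (n : ℝ)) / (1 - (i : ℝ) / (n : ℝ))
  else 0


/-- The near fixed point: `muSeq n d lam i` is the paper's `μ_{n,i+1}`, i.e.
`μ_{n,1} = λ_n` and `μ_{n,i+1} = λ_n β_n(μ_{n,i})`. -/
noncomputable def muSeq (n d : ℕ) (lam : ℝ) : ℕ → ℝ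
  | 0 => lam
  | i + 1 => lam * betaFn n d (muSeq n d lam i)


lemma frac_lt_one {n d : ℕ} (hn : 1 ≤ n) (hd : d ≤ n) {i : ℕ} (hi : i ∈ Finset.range d) :
    (i : ℝ) / (n : ℝ) < 1 := by
  rw [div_lt_one (by exact_mod_cast hn)]
  exact_mod_cast lt_of_lt_of_le (Finset.mem_range.mp hi) hd

lemma beta_nonneg (n d : ℕ) (x : ℝ) : 0 ≤ betaFn n d x :=
  Finset.prod_nonneg fun _ _ => le_max_right _ _

lemma beta_le_one {n d : ℕ} (hn : 1 ≤ n) (hd : d ≤ n) {x : ℝ} (hx : x ≤ 1) :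
    betaFn n d x ≤ 1 := by
  apply Finset.prod_le_one (fun _ _ => le_max_right _ _)
  intro i hi
  have h1 := frac_lt_one hn hd hi
  have h2 : (0:ℝ) ≤ (i:ℝ)/n := by positivity
  apply max_le _ zero_le_one
  rw [div_le_one (by linarith)]
  linarith

lemma beta_mono {n d : ℕ} (hn : 1 ≤ n) (hd : d ≤ n) : Monotone (betaFn n d) := by
  intro x y hxy
  apply Finset.prod_le_prod (fun _ _ => le_max_right _ _)
  intro i hi
  have h1 := frac_lt_one hn hd hi
  apply max_le_max _ le_rfl
  apply div_le_div_of_nonneg_right (by linarith) (by linarith)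

lemma beta_le_self {n d : ℕ} (hn : 1 ≤ n) (hd1 : 1 ≤ d) (hd : d ≤ n) {x : ℝ}
    (hx0 : 0 ≤ x) (hx1 : x ≤ 1) : betaFn n d x ≤ x := by
  have h : betaFn n d x ≤ ∏ _i ∈ Finset.range d, x := by
    apply Finset.prod_le_prod (fun _ _ => le_max_right _ _)
    intro i hi
    have h1 := frac_lt_one hn hd hi
    have h2 : (0:ℝ) ≤ (i:ℝ)/n := by positivity
    apply max_le _ hx0
    rw [div_le_iff₀ (by linarith)]
    nlinarith
  rw [Finset.prod_const, Finset.card_range] at h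
  calc betaFn n d x ≤ x ^ d := h
    _ ≤ x ^ 1 := pow_le_pow_of_le_one hx0 hx1 hd1
    _ = x := pow_one x

lemma beta_one {n d : ℕ} (hn : 1 ≤ n) (hd : d ≤ n) : betaFn n d 1 = 1 := by
  apply Finset.prod_eq_one
  intro i hi
  have h1 := frac_lt_one hn hd hi
  rw [div_self (by linarith), max_eq_left zero_le_one]

lemma beta_zero {n d : ℕ} (hd1 : 1 ≤ d) : betaFn n d 0 = 0 := by
  apply Finset.prod_eq_zero (Finset.mem_range.mpr hd1)
  norm_num

lemma beta_cont (n d : ℕ) : Continuous (betaFn n d) := by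
  apply continuous_finset_prod
  intro i _
  exact ((continuous_id.sub continuous_const).div_const _).max continuous_const

/-- Remark 3.1: the near fixed point `μ_n` belongs to `ℓ↓` and is the unique
`x ∈ ℓ↓` with `a_n(x) = b(x)`, i.e.
`λ_n (β_n(x_{i−1}) − β_n(x_i)) = x_i − x_{i+1}` for all `i ≥ 1` (with `x₀ = 1`);
here `x i` stands for the paper's `x_{i+1}`. -/
theorem stmt18 (n : ℕ) (hn : 1 ≤ n) (dn : ℕ) (hdn1 : 1 ≤ dn) (hdn2 : dn ≤ n)
    (lam : ℝ) (hlam : lam ∈ Set.Ioo (0 : ℝ) 1) :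
    MemLdown (muSeq n dn lam) ∧
    (∀ i : ℕ,
      lam * (betaFn n dn (if i = 0 then 1 else muSeq n dn lam (i - 1)) -
          betaFn n dn (muSeq n dn lam i)) =
        muSeq n dn lam i - muSeq n dn lam (i + 1)) ∧
    (∀ x : ℕ → ℝ, MemLdown x →
      (∀ i : ℕ,
        lam * (betaFn n dn (if i = 0 then 1 else x (i - 1)) - betaFn n dn (x i)) =
          x i - x (i + 1)) →
      x = muSeq n dn lam) := by
  obtain ⟨hl0, hl1⟩ := hlam
  -- basic bounds on muSeq
  have hmu : ∀ i, 0 ≤ muSeq n dn lam i ∧ muSeq n dn lam i ≤ lam ^ (i + 1) := by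
    intro i
    induction i with
    | zero => simpa [muSeq] using hl0.le
    | succ i ih =>
      have hle1 : muSeq n dn lam i ≤ 1 :=
        ih.2.trans (pow_le_one₀ hl0.le hl1.le)
      refine ⟨mul_nonneg hl0.le (beta_nonneg _ _ _), ?_⟩
      calc muSeq n dn lam (i + 1) = lam * betaFn n dn (muSeq n dn lam i) := rfl
        _ ≤ lam * muSeq n dn lam i :=
            mul_le_mul_of_nonneg_left (beta_le_self hn hdn1 hdn2 ih.1 hle1) hl0.le
        _ ≤ lam * lam ^ (i + 1) := mul_le_mul_of_nonneg_left ih.2 hl0.le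
        _ = lam ^ (i + 1 + 1) := by ring
  have hmu01 : ∀ i, 0 ≤ muSeq n dn lam i ∧ muSeq n dn lam i ≤ 1 :=
    fun i => ⟨(hmu i).1, (hmu i).2.trans (pow_le_one₀ hl0.le hl1.le)⟩
  have hanti : ∀ i, muSeq n dn lam (i + 1) ≤ muSeq n dn lam i := by
    intro i
    induction i with
    | zero =>
      calc muSeq n dn lam 1 = lam * betaFn n dn lam := rfl
        _ ≤ lam * 1 := mul_le_mul_of_nonneg_left (beta_le_one hn hdn2 hl1.le) hl0.le
        _ = muSeq n dn lam 0 := by simp [muSeq]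
    | succ i ih =>
      calc muSeq n dn lam (i + 2) = lam * betaFn n dn (muSeq n dn lam (i + 1)) := rfl
        _ ≤ lam * betaFn n dn (muSeq n dn lam i) :=
            mul_le_mul_of_nonneg_left (beta_mono hn hdn2 ih) hl0.le
        _ = muSeq n dn lam (i + 1) := rfl
  have hsum : Summable (muSeq n dn lam) := by
    have hg : Summable (fun i : ℕ => lam ^ (i + 1)) := by
      simpa [pow_succ] using
        (summable_geometric_of_lt_one hl0.le hl1).mul_right lam
    exact Summable.of_nonneg_of_le (fun i => (hmu i).1) (fun i => (hmu i).2) hg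
  refine ⟨⟨hmu01, hanti, hsum⟩, ?_, ?_⟩
  · -- the fixed point equations
    intro i
    cases i with
    | zero => simp [muSeq, beta_one hn hdn2]; ring
    | succ i => simp [muSeq]; ring
  · -- uniqueness
    intro x hx h
    obtain ⟨hx01, hxanti, hxsum⟩ := hx
    have hx0 : Tendsto x atTop (𝓝 0) := hxsum.tendsto_atTop_zero
    have key : ∀ k, x k = lam * betaFn n dn (if k = 0 then 1 else x (k - 1)) := by
      intro k
      have tele : ∀ N, k ≤ N →
          lam * (betaFn n dn (if k = 0 then 1 else x (k - 1)) - betaFn n dn (x N)) =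
            x k - x (N + 1) := by
        intro N
        induction N with
        | zero =>
          intro hk
          interval_cases k
          exact h 0
        | succ N ihN =>
          intro hk
          rcases Nat.lt_or_ge k (N + 1) with hlt | hge
          · have h1 := ihN (Nat.lt_succ_iff.mp hlt)
            have h2 := h (N + 1)
            simp only [Nat.succ_ne_zero, if_false, Nat.add_sub_cancel] at h2
            linarith
          · have hk' : k = N + 1 := le_antisymm hk hge
            subst hk'
            have h2 := h (N + 1)
            simpa using h2
      set C : ℝ := betaFn n dn (if k = 0 then 1 else x (k - 1)) with hC
      have h1 : Tendsto (fun N => lam * (C - betaFn n dn (x N))) atTop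
          (𝓝 (lam * (C - betaFn n dn 0))) := by
        exact (tendsto_const_nhds.sub
          (((beta_cont n dn).continuousAt.tendsto).comp hx0)).const_mul lam
      have h2 : Tendsto (fun N => x k - x (N + 1)) atTop (𝓝 (x k - 0)) :=
        tendsto_const_nhds.sub (hx0.comp (tendsto_add_atTop_nat 1))
      have heq : (fun N => lam * (C - betaFn n dn (x N))) =ᶠ[atTop]
          (fun N => x k - x (N + 1)) := eventually_atTop.mpr ⟨k, tele⟩
      have huniq := tendsto_nhds_unique (h1.congr' heq) h2
      rw [beta_zero hdn1] at huniq
      linarith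
    funext k
    induction k with
    | zero =>
      have h0 := key 0
      rw [if_pos rfl] at h0
      rw [h0, beta_one hn hdn2, mul_one]
      rfl
    | succ k ih =>
      have := key (k + 1)
      simp only [Nat.succ_ne_zero, if_false, Nat.add_sub_cancel] at this
      rw [this, ih]
      rfl
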